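/- arXiv:1310.4114 — 3 statements merged into one kernel-verified Lean document; each statement's English description precedes it below -/
import Mathlib

section
/- Let K be an algebraically closed field equipped with a nontrivial non-archimedean absolute value |·|, let a be a coefficient tuple over K, and let Z ⊆ ℙ^N(K) be an arbitrary subset. Then: (1) λ(f_a(Z)) ≤ d·max{B(f_a), λ(Z)} (as elements of [0,∞], where f_a(Z) is the image of Z under f_a); and (2) if λ(Z) > B(f_a), then λ(f_a(Z)) = d·λ(Z). -/
open MvPolynomial Filter Topology
open scoped ENNReal

noncomputable section

/-- Multi-indices `I = (I_0, …, I_N)` of nonnegative integers with `|I| = d` and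
`0 < I_N < d` (the set `Ind*(N,d)`). -/
abbrev MIdx (N d : ℕ) : Type :=
  {I : Fin (N + 1) → Fin (d + 1) //
    (∑ j, (I j : ℕ)) = d ∧ 0 < (I (Fin.last N) : ℕ) ∧ (I (Fin.last N) : ℕ) < d}

/-- A coefficient tuple `a = (a_{i,I})` for `0 ≤ i < N` and `I ∈ Ind*(N,d)`. -/
abbrev Coeffs (N d : ℕ) (K : Type*) : Type _ := Fin N → MIdx N d → K

variable {K : Type*} [Field K]

/-- The homogeneous coordinate forms of the monic polynomial endomorphism `f_a`:
`f_i = x_i^d + ∑_{I} a_{i,I} x^I` for `i < N`, and `f_N = x_N^d`. -/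
def fPoly (N d : ℕ) (a : Coeffs N d K) (i : Fin (N + 1)) : MvPolynomial (Fin (N + 1)) K :=
  if h : (i : ℕ) < N then
    X i ^ d + ∑ I : MIdx N d, C (a ⟨(i : ℕ), h⟩ I) * ∏ t, X t ^ (I.1 t : ℕ)
  else X i ^ d

/-- `f_a` on homogeneous coordinate vectors. -/
def Fvec (N d : ℕ) (a : Coeffs N d K) (x : Fin (N + 1) → K) : Fin (N + 1) → K :=
  fun i => eval x (fPoly N d a i)

/-- The Jacobian form `J_{f_a} = det(∂f_i/∂x_j)_{0 ≤ i,j ≤ N-1}`. -/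
def Jpoly (N d : ℕ) (a : Coeffs N d K) : MvPolynomial (Fin (N + 1)) K :=
  (Matrix.of fun i j : Fin N =>
    pderiv (Fin.castSucc j) (fPoly N d a (Fin.castSucc i))).det

/-- The critical locus `C_{f_a} ⊆ ℙ^N(K)`. -/
def critLocus (N d : ℕ) (a : Coeffs N d K) : Set (Projectivization K (Fin (N + 1) → K)) :=
  {P | ∃ (x : Fin (N + 1) → K) (hx : x ≠ 0),
        eval x (Jpoly N d a) = 0 ∧ P = Projectivization.mk K x hx}

/-- Image of a subset of `ℙ^N(K)` under the projective map induced by a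
homogeneous polynomial map `F` on coordinates. -/
def imSet {K : Type*} [Field K] (N : ℕ) (F : (Fin (N + 1) → K) → (Fin (N + 1) → K))
    (S : Set (Projectivization K (Fin (N + 1) → K))) :
    Set (Projectivization K (Fin (N + 1) → K)) :=
  {Q | ∃ (x : Fin (N + 1) → K) (hx : x ≠ 0) (hFx : F x ≠ 0),
        Projectivization.mk K x hx ∈ S ∧ Q = Projectivization.mk K (F x) hFx}

/-- `f_a^n(C_{f_a})`, the image of the critical locus under the `n`-th iterate. -/
def critImage (N d : ℕ) (a : Coeffs N d K) (n : ℕ) :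
    Set (Projectivization K (Fin (N + 1) → K)) :=
  (imSet N (Fvec N d a))^[n] (critLocus N d a)

/-- `f_a` is post-critically finite: the sets `f_a^n(C_{f_a})` take only finitely
many distinct values. -/
def IsPCF (N d : ℕ) (a : Coeffs N d K) : Prop :=
  (Set.range fun n => critImage N d a n).Finite

/-- `λ(Z) = log⁺ sup {|β_N|⁻¹ : |β_0| = ⋯ = |β_{N-1}| = 1, β_N ≠ 0, [β] ∈ Z} ∈ [0,∞]`,
with `sup ∅ = 0`. -/
def lam (N : ℕ) (v : AbsoluteValue K ℝ)
    (Z : Set (Projectivization K (Fin (N + 1) → K))) : ℝ≥0∞ :=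
  ⨆ (β : Fin (N + 1) → K) (hβ : β ≠ 0)
    (_ : ∀ j : Fin N, v (β (Fin.castSucc j)) = 1)
    (_ : β (Fin.last N) ≠ 0)
    (_ : Projectivization.mk K β hβ ∈ Z),
    ENNReal.ofReal (Real.log ((v (β (Fin.last N)))⁻¹))

/-- `B(f_a) = log⁺ max_{i,I} |a_{i,I}|^{1/I_N}`. -/
def Bnorm (N d : ℕ) (v : AbsoluteValue K ℝ) (a : Coeffs N d K) : ℝ :=
  max 0 (⨆ (i : Fin N) (I : MIdx N d),
    Real.log (v (a i I) ^ ((((I.1 (Fin.last N) : ℕ)) : ℝ))⁻¹))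

end

/-! At a point with `|x_j| ≤ 1` for `j < N` and `|x_N| = t`, every monomial of the tail
`∑_I a_{i,I} x^I` has absolute value at most `(e^B t)^{I_N} ≤ e^B t`, because `I_N ≥ 1`.
So when `e^B t < 1` the ultrametric inequality makes `x_i^d` dominate `f_i(x)`: `f_a` maps
the representatives with unit first coordinates exactly onto such representatives, while
`log (1/|x_N|)` gets multiplied by `d`. Points with `log (1/t) ≤ B` contribute at most `d B`.
Over an algebraically closed field, every normalized representative of `f_a(P)` is `f_a` of a
representative of `P`, after rescaling by a `d`-th root. -/

section Nonarchimedean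

variable {K : Type*} [Field K] {v : AbsoluteValue K ℝ}

lemma IsNonarchimedean.apply_sum_le_of_forall_le (hna : IsNonarchimedean (v : K → ℝ))
    {ι : Type*} {s : Finset ι} {g : ι → K} {M : ℝ} (hM : 0 ≤ M) (h : ∀ i ∈ s, v (g i) ≤ M) :
    v (∑ i ∈ s, g i) ≤ M :=
  Finset.sum_induction g (fun y => v y ≤ M)
    (fun _ _ hy hz => (hna _ _).trans (max_le hy hz)) (by simpa using hM) h

lemma IsNonarchimedean.apply_add_eq_one_iff (hna : IsNonarchimedean (v : K → ℝ)) {u s : K}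
    (hs : v s < 1) : v (u + s) = 1 ↔ v u = 1 := by
  constructor
  · intro h
    have := hna.add_eq_left_of_lt (x := u + s) (y := -s) (by rwa [h, map_neg_eq_map])
    rwa [add_neg_cancel_right, h] at this
  · intro h
    rw [hna.add_eq_left_of_lt (by rwa [h]), h]

end Nonarchimedean

section NormalForm

variable {K : Type*} [Field K] {N d : ℕ} (a : Coeffs N d K)

def tailSum (i : Fin N) (x : Fin (N + 1) → K) : K :=
  ∑ I : MIdx N d, a i I * ∏ s, x s ^ (I.1 s : ℕ)

lemma Fvec_last (x : Fin (N + 1) → K) : Fvec N d a x (Fin.last N) = x (Fin.last N) ^ d := by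
  simp [Fvec, fPoly]

lemma Fvec_castSucc (i : Fin N) (x : Fin (N + 1) → K) :
    Fvec N d a x i.castSucc = x i.castSucc ^ d + tailSum a i x := by
  simp [Fvec, fPoly, tailSum]

lemma Fvec_smul (c : K) (x : Fin (N + 1) → K) : Fvec N d a (c • x) = c ^ d • Fvec N d a x := by
  funext i
  induction i using Fin.lastCases with
  | last => simp [Fvec_last, mul_pow]
  | cast j =>
    have hmon (I : MIdx N d) :
        ∏ s, c ^ (I.1 s : ℕ) * x s ^ (I.1 s : ℕ) = c ^ d * ∏ s, x s ^ (I.1 s : ℕ) := by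
      rw [Finset.prod_mul_distrib, Finset.prod_pow_eq_pow_sum, I.2.1]
    simp only [Fvec_castSucc, tailSum, Pi.smul_apply, smul_eq_mul, hmon, mul_pow, mul_add,
      Finset.mul_sum]
    congr 1
    exact Finset.sum_congr rfl fun I _ => by ring

variable {v : AbsoluteValue K ℝ}

lemma apply_coeff_le_exp_Bnorm_pow (i : Fin N) (I : MIdx N d) :
    v (a i I) ≤ Real.exp (Bnorm N d v a) ^ (I.1 (Fin.last N) : ℕ) := by
  have hn : (I.1 (Fin.last N) : ℕ) ≠ 0 := I.2.2.1.ne'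
  rcases (v.nonneg (a i I)).eq_or_lt with h0 | hpos
  · rw [← h0]
    positivity
  have hlog : Real.log (v (a i I) ^ ((I.1 (Fin.last N) : ℕ) : ℝ)⁻¹) ≤ Bnorm N d v a :=
    ((Finite.le_ciSup _ I).trans (Finite.le_ciSup (fun i' => ⨆ I' : MIdx N d,
      Real.log (v (a i' I') ^ ((I'.1 (Fin.last N) : ℕ) : ℝ)⁻¹)) i)).trans (le_max_right _ _)
  rw [Real.log_le_iff_le_exp (by positivity)] at hlog
  calc v (a i I) = (v (a i I) ^ ((I.1 (Fin.last N) : ℕ) : ℝ)⁻¹) ^ (I.1 (Fin.last N) : ℕ) :=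
        (Real.rpow_inv_natCast_pow (v.nonneg _) hn).symm
    _ ≤ _ := pow_le_pow_left₀ (by positivity) hlog _

lemma apply_monomial_le (I : MIdx N d) {x : Fin (N + 1) → K} {m t : ℝ} (hm : 0 ≤ m)
    (hx : ∀ j : Fin N, v (x j.castSucc) ≤ m) (hxN : v (x (Fin.last N)) ≤ t) :
    v (∏ s, x s ^ (I.1 s : ℕ)) ≤
      m ^ (d - (I.1 (Fin.last N) : ℕ)) * t ^ (I.1 (Fin.last N) : ℕ) := by
  have hdeg : ∑ j : Fin N, (I.1 j.castSucc : ℕ) = d - (I.1 (Fin.last N) : ℕ) := by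
    have := I.2.1
    rw [Fin.sum_univ_castSucc] at this
    omega
  rw [map_prod, Fin.prod_univ_castSucc, ← hdeg, ← Finset.prod_pow_eq_pow_sum]
  simp only [map_pow]
  gcongr with j
  exact hx j

lemma apply_tailSum_le (hna : IsNonarchimedean (v : K → ℝ)) (i : Fin N)
    {x : Fin (N + 1) → K} {m t : ℝ} (hx : ∀ j : Fin N, v (x j.castSucc) ≤ m)
    (hxN : v (x (Fin.last N)) ≤ t) (hbt : Real.exp (Bnorm N d v a) * t ≤ m) :
    v (tailSum a i x) ≤ Real.exp (Bnorm N d v a) * t * m ^ (d - 1) := by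
  set b := Real.exp (Bnorm N d v a)
  have ht : 0 ≤ t := (v.nonneg _).trans hxN
  have hbt0 : 0 ≤ b * t := by positivity
  have hm : 0 ≤ m := hbt0.trans hbt
  refine hna.apply_sum_le_of_forall_le (by positivity) fun I _ => ?_
  set n := (I.1 (Fin.last N) : ℕ)
  have hn : 1 ≤ n := I.2.2.1
  have hnd : n < d := I.2.2.2
  have hpow : (b * t) ^ n = b * t * (b * t) ^ (n - 1) := by
    rw [← pow_succ', Nat.sub_add_cancel hn]
  calc v (a i I * ∏ s, x s ^ (I.1 s : ℕ)) ≤ b ^ n * (m ^ (d - n) * t ^ n) := by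
        rw [map_mul]
        exact mul_le_mul (apply_coeff_le_exp_Bnorm_pow a i I) (apply_monomial_le I hm hx hxN)
          (v.nonneg _) (by positivity)
    _ = b * t * ((b * t) ^ (n - 1) * m ^ (d - n)) := by
        rw [← mul_assoc (b * t), ← hpow, mul_pow]; ring
    _ ≤ b * t * (m ^ (n - 1) * m ^ (d - n)) := by gcongr
    _ = b * t * m ^ (d - 1) := by rw [← pow_add]; congr 2; omega

lemma apply_tailSum_lt_one (hna : IsNonarchimedean (v : K → ℝ)) (i : Fin N)
    {x : Fin (N + 1) → K} (hx : ∀ j : Fin N, v (x j.castSucc) ≤ 1)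
    (hbt : Real.exp (Bnorm N d v a) * v (x (Fin.last N)) < 1) : v (tailSum a i x) < 1 := by
  have := apply_tailSum_le a hna i hx le_rfl hbt.le
  rw [one_pow, mul_one] at this
  exact this.trans_lt hbt

lemma apply_castSucc_le_one_of_apply_Fvec_eq_one (hna : IsNonarchimedean (v : K → ℝ))
    (hd : d ≠ 0) {x : Fin (N + 1) → K} (hF : ∀ i : Fin N, v (Fvec N d a x i.castSucc) = 1)
    (hbt : Real.exp (Bnorm N d v a) * v (x (Fin.last N)) < 1) (j : Fin N) :
    v (x j.castSucc) ≤ 1 := by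
  have : Nonempty (Fin N) := ⟨j⟩
  obtain ⟨i, hi⟩ := Finite.exists_max fun j : Fin N => v (x j.castSucc)
  refine (hi j).trans (not_lt.1 fun hm => ?_)
  set m := v (x i.castSucc)
  -- at a coordinate of maximal size `m > 1`, the leading term `x_i^d` dominates `f_i(x)`
  have htail : v (tailSum a i x) < v (x i.castSucc ^ d) := by
    calc v (tailSum a i x) ≤ Real.exp (Bnorm N d v a) * v (x (Fin.last N)) * m ^ (d - 1) :=
          apply_tailSum_le a hna i hi le_rfl (hbt.trans hm).le
      _ < m * m ^ (d - 1) := by gcongr; exact hbt.trans hm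
      _ = v (x i.castSucc ^ d) := by rw [map_pow, ← pow_sub_one_mul hd m, mul_comm]
  have hFi := hF i
  rw [Fvec_castSucc, hna.add_eq_left_of_lt htail, map_pow] at hFi
  exact (one_lt_pow₀ hm hd).ne' hFi

lemma forall_apply_Fvec_castSucc_eq_one_iff (hna : IsNonarchimedean (v : K → ℝ)) (hd : d ≠ 0)
    {x : Fin (N + 1) → K} (hbt : Real.exp (Bnorm N d v a) * v (x (Fin.last N)) < 1) :
    (∀ i : Fin N, v (Fvec N d a x i.castSucc) = 1) ↔ ∀ i : Fin N, v (x i.castSucc) = 1 := by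
  have key (hx : ∀ j : Fin N, v (x j.castSucc) ≤ 1) (i : Fin N) :
      v (Fvec N d a x i.castSucc) = 1 ↔ v (x i.castSucc) = 1 := by
    rw [Fvec_castSucc, hna.apply_add_eq_one_iff (apply_tailSum_lt_one a hna i hx hbt), map_pow,
      pow_eq_one_iff_of_nonneg (v.nonneg _) hd]
  constructor
  · intro hF i
    exact (key (apply_castSucc_le_one_of_apply_Fvec_eq_one a hna hd hF hbt) i).1 (hF i)
  · intro hx i
    exact (key (fun j => (hx j).le) i).2 (hx i)

lemma ofReal_log_inv_apply_Fvec_last (x : Fin (N + 1) → K) :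
    ENNReal.ofReal (Real.log (v (Fvec N d a x (Fin.last N)))⁻¹) =
      d * ENNReal.ofReal (Real.log (v (x (Fin.last N)))⁻¹) := by
  rw [Fvec_last, map_pow, ← inv_pow, Real.log_pow, ENNReal.ofReal_mul (by positivity),
    ENNReal.ofReal_natCast]

end NormalForm

lemma exp_mul_lt_one_of_lt_log_inv {B t : ℝ} (ht : 0 < t) (h : B < Real.log t⁻¹) :
    Real.exp B * t < 1 := by
  calc Real.exp B * t < t⁻¹ * t := by gcongr; exact (Real.lt_log_iff_exp_lt (by positivity)).1 h
    _ = 1 := inv_mul_cancel₀ ht.ne'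

section Projective

variable {K : Type*} [Field K] {N : ℕ}

lemma exists_eq_of_mk_mem_imSet [IsAlgClosed K] {d : ℕ} (hd : d ≠ 0)
    {F : (Fin (N + 1) → K) → (Fin (N + 1) → K)} (hF : ∀ (c : K) x, F (c • x) = c ^ d • F x)
    {Z : Set (Projectivization K (Fin (N + 1) → K))} {γ : Fin (N + 1) → K} (hγ : γ ≠ 0)
    (h : Projectivization.mk K γ hγ ∈ imSet N F Z) :
    ∃ (y : Fin (N + 1) → K) (hy : y ≠ 0), Projectivization.mk K y hy ∈ Z ∧ F y = γ := by
  obtain ⟨x, hx, hFx, hxZ, hγx⟩ := h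
  obtain ⟨u, hu⟩ := (Projectivization.mk_eq_mk_iff K _ _ _ _).1 hγx
  obtain ⟨w, hw⟩ := IsAlgClosed.exists_pow_nat_eq (u : K) (Nat.pos_of_ne_zero hd)
  have hw0 : w ≠ 0 := by
    rintro rfl
    exact u.ne_zero (by rw [← hw, zero_pow hd])
  refine ⟨w • x, smul_ne_zero hw0 hx, ?_, by rw [hF, hw, ← hu, Units.smul_def]⟩
  rwa [(Projectivization.mk_eq_mk_iff K _ _ (smul_ne_zero hw0 hx) hx).2 ⟨Units.mk0 w hw0, rfl⟩]

variable {v : AbsoluteValue K ℝ} {Z : Set (Projectivization K (Fin (N + 1) → K))}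

lemma le_lam {β : Fin (N + 1) → K} (hβ : β ≠ 0) (hβ1 : ∀ j : Fin N, v (β j.castSucc) = 1)
    (hβN : β (Fin.last N) ≠ 0) (hβZ : Projectivization.mk K β hβ ∈ Z) :
    ENNReal.ofReal (Real.log (v (β (Fin.last N)))⁻¹) ≤ lam N v Z :=
  le_iSup_of_le β <| le_iSup_of_le hβ <| le_iSup_of_le hβ1 <| le_iSup_of_le hβN <|
    le_iSup_of_le hβZ le_rfl

lemma mul_lam_le {c e : ℝ≥0∞}
    (h : ∀ (β : Fin (N + 1) → K) (hβ : β ≠ 0), (∀ j : Fin N, v (β j.castSucc) = 1) →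
      β (Fin.last N) ≠ 0 → Projectivization.mk K β hβ ∈ Z →
      c * ENNReal.ofReal (Real.log (v (β (Fin.last N)))⁻¹) ≤ e) :
    c * lam N v Z ≤ e := by
  simp only [lam, ENNReal.mul_iSup]
  exact iSup_le fun β => iSup_le fun hβ => iSup_le fun hβ1 => iSup_le fun hβN =>
    iSup_le fun hβZ => h β hβ hβ1 hβN hβZ

end Projective

section Growth

variable {K : Type*} [Field K] {N d : ℕ} {v : AbsoluteValue K ℝ} (a : Coeffs N d K)
  (Z : Set (Projectivization K (Fin (N + 1) → K)))

lemma lam_imSet_le [IsAlgClosed K] (hna : IsNonarchimedean (v : K → ℝ)) (hd : d ≠ 0) :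
    lam N v (imSet N (Fvec N d a) Z) ≤
      d * max (ENNReal.ofReal (Bnorm N d v a)) (lam N v Z) := by
  rw [← one_mul (lam N v _)]
  refine mul_lam_le fun γ hγ hγ1 hγN hγZ => ?_
  obtain ⟨y, hy, hyZ, rfl⟩ := exists_eq_of_mk_mem_imSet hd (Fvec_smul a) hγ hγZ
  have hyN : y (Fin.last N) ≠ 0 := fun h => hγN (by rw [Fvec_last, h, zero_pow hd])
  rw [one_mul, ofReal_log_inv_apply_Fvec_last]
  gcongr
  rcases le_or_gt (Real.log (v (y (Fin.last N)))⁻¹) (Bnorm N d v a) with hB | hB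
  · exact (ENNReal.ofReal_le_ofReal hB).trans (le_max_left _ _)
  · have hy1 := (forall_apply_Fvec_castSucc_eq_one_iff a hna hd
      (exp_mul_lt_one_of_lt_log_inv (v.pos hyN) hB)).1 hγ1
    exact (le_lam hy hy1 hyN hyZ).trans (le_max_right _ _)

lemma mul_lam_le_max_lam_imSet (hna : IsNonarchimedean (v : K → ℝ)) (hd : d ≠ 0) :
    d * lam N v Z ≤
      max (d * ENNReal.ofReal (Bnorm N d v a)) (lam N v (imSet N (Fvec N d a) Z)) := by
  refine mul_lam_le fun β hβ hβ1 hβN hβZ => ?_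
  rcases le_or_gt (Real.log (v (β (Fin.last N)))⁻¹) (Bnorm N d v a) with hB | hB
  · exact (by gcongr : _ ≤ d * ENNReal.ofReal (Bnorm N d v a)).trans (le_max_left _ _)
  · have hF1 := (forall_apply_Fvec_castSucc_eq_one_iff a hna hd
      (exp_mul_lt_one_of_lt_log_inv (v.pos hβN) hB)).2 hβ1
    have hFN : Fvec N d a β (Fin.last N) ≠ 0 := by rw [Fvec_last]; exact pow_ne_zero _ hβN
    have hF : Fvec N d a β ≠ 0 := fun h => hFN (by rw [h, Pi.zero_apply])
    rw [← ofReal_log_inv_apply_Fvec_last]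
    have hFZ : Projectivization.mk K _ hF ∈ imSet N (Fvec N d a) Z := ⟨β, hβ, hF, hβZ, rfl⟩
    exact (le_lam hF hF1 hFN hFZ).trans (le_max_right _ _)

end Growth

theorem stmt9_general (N d : ℕ) (hd : 2 ≤ d) (K : Type*) [Field K] [IsAlgClosed K]
    (v : AbsoluteValue K ℝ) (hna : IsNonarchimedean (v : K → ℝ))
    (a : Coeffs N d K) (Z : Set (Projectivization K (Fin (N + 1) → K))) :
    lam N v (imSet N (Fvec N d a) Z) ≤
      (d : ℝ≥0∞) * max (ENNReal.ofReal (Bnorm N d v a)) (lam N v Z) ∧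
    (ENNReal.ofReal (Bnorm N d v a) < lam N v Z →
      lam N v (imSet N (Fvec N d a) Z) = (d : ℝ≥0∞) * lam N v Z) := by
  have hd0 : d ≠ 0 := by omega
  have hle := lam_imSet_le a Z hna hd0
  refine ⟨hle, fun hB => le_antisymm ?_ ?_⟩
  · rwa [max_eq_right hB.le] at hle
  · have hdB : (d : ℝ≥0∞) * ENNReal.ofReal (Bnorm N d v a) < d * lam N v Z :=
      (ENNReal.mul_lt_mul_iff_right (by exact_mod_cast hd0) (ENNReal.natCast_ne_top d)).2 hB
    exact (le_max_iff.1 (mul_lam_le_max_lam_imSet a Z hna hd0)).resolve_left hdB.not_ge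

/-- Over an algebraically closed field with a nontrivial non-archimedean
absolute value, for every subset `Z ⊆ ℙ^N(K)`:
(1) `λ(f_a(Z)) ≤ d·max{B(f_a), λ(Z)}`, and
(2) if `λ(Z) > B(f_a)` then `λ(f_a(Z)) = d·λ(Z)`. -/
theorem stmt9 (N d : ℕ) (hN : 1 ≤ N) (hd : 2 ≤ d) (K : Type*) [Field K] [IsAlgClosed K]
    (v : AbsoluteValue K ℝ) (hna : IsNonarchimedean (v : K → ℝ))
    (hnt : ∃ x : K, x ≠ 0 ∧ v x ≠ 1)
    (a : Coeffs N d K) (Z : Set (Projectivization K (Fin (N + 1) → K))) :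
    lam N v (imSet N (Fvec N d a) Z) ≤
      (d : ℝ≥0∞) * max (ENNReal.ofReal (Bnorm N d v a)) (lam N v Z) ∧
    (ENNReal.ofReal (Bnorm N d v a) < lam N v Z →
      lam N v (imSet N (Fvec N d a) Z) = (d : ℝ≥0∞) * lam N v Z) :=
  stmt9_general N d hd K v hna a Z
end

section
/- Let g ∈ ℂ[z] have degree e ≥ 1, with coefficients a_0, a_1, …, a_e (so a_e ≠ 0). Define N(g) = max_{0 ≤ i < e} (|a_i|/|a_e|)^{1/(e−i)} and M(g) = max{|β| : β ∈ ℂ, g(β) = 0}. Then M(g)/e ≤ N(g) ≤ e·exp(1)·M(g); equivalently, log M(g) − log e ≤ log N(g) ≤ log M(g) + log e + 1 whenever these logarithms are defined. -/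
noncomputable section

/-- `N(g) = max_{0 ≤ i < e} (|a_i|/|a_e|)^{1/(e-i)}` for `g` of degree `e` with
coefficients `a_i`. -/
def Ng (g : Polynomial ℂ) : ℝ :=
  ⨆ i : Fin g.natDegree,
    (‖g.coeff i‖ / ‖g.leadingCoeff‖) ^
      (((g.natDegree : ℝ) - ((i : ℕ) : ℝ)))⁻¹

/-- `M(g) = max {|β| : g(β) = 0}`. -/
def Mg (g : Polynomial ℂ) : ℝ :=
  ⨆ β : {z : ℂ // g.IsRoot z}, ‖(β : ℂ)‖

end

/-!
By Vieta, `a_i / a_e = ± e_{e-i}(roots)`, and the elementary symmetric function has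
`C(e, e-i) ≤ e^(e-i)` terms each of modulus at most `M^(e-i)`; hence `N ≤ e M`.
Conversely `|a_i| ≤ |a_e| N^(e-i)`, so at a root `z` with `|z| > N` each lower term of
`|a_e| |z|^e ≤ ∑_{i<e} |a_i| |z|^i` is at most `|a_e| N |z|^(e-1)`, which forces `|z| ≤ e N`.
-/

open Polynomial

section NormBounds

variable {R : Type*} [SeminormedCommRing R] [NormOneClass R] {M : ℝ}

theorem Multiset.norm_prod_le_pow_card (hM : 0 ≤ M) {t : Multiset R}
    (h : ∀ x ∈ t, ‖x‖ ≤ M) :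
    ‖t.prod‖ ≤ M ^ Multiset.card t := by
  induction t using Multiset.induction_on with
  | empty => simp
  | cons a s ih =>
    rw [Multiset.prod_cons, Multiset.card_cons, pow_succ']
    exact (norm_mul_le _ _).trans <| mul_le_mul (h a (Multiset.mem_cons_self a s))
      (ih fun x hx => h x (Multiset.mem_cons_of_mem hx)) (norm_nonneg _) hM

theorem Multiset.norm_esymm_le (hM : 0 ≤ M) {s : Multiset R} (h : ∀ x ∈ s, ‖x‖ ≤ M)
    (k : ℕ) :
    ‖s.esymm k‖ ≤ (Multiset.card s).choose k * M ^ k := by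
  have hsub : ∀ x ∈ ((s.powersetCard k).map Multiset.prod).map (‖·‖), x ≤ M ^ k := by
    simp only [Multiset.map_map, Multiset.mem_map, Multiset.mem_powersetCard, Function.comp]
    rintro _ ⟨t, ⟨hts, rfl⟩, rfl⟩
    exact Multiset.norm_prod_le_pow_card hM fun x hx => h x (Multiset.mem_of_le hts hx)
  calc ‖s.esymm k‖ ≤ (((s.powersetCard k).map Multiset.prod).map (‖·‖)).sum :=
        norm_multiset_sum_le _
    _ ≤ Multiset.card (((s.powersetCard k).map Multiset.prod).map (‖·‖)) • M ^ k :=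
        Multiset.sum_le_card_nsmul _ _ hsub
    _ = (Multiset.card s).choose k * M ^ k := by simp

end NormBounds

namespace Polynomial

variable {K : Type*} [NormedField K] {p : K[X]}

theorem norm_coeff_le_of_forall_norm_root_le (hsplit : Multiset.card p.roots = p.natDegree)
    {R : ℝ} (hR : 0 ≤ R) (hroots : ∀ x ∈ p.roots, ‖x‖ ≤ R) {i : ℕ}
    (hi : i ≤ p.natDegree) :
    ‖p.coeff i‖ ≤ ‖p.leadingCoeff‖ * (p.natDegree * R) ^ (p.natDegree - i) := by
  rw [coeff_eq_esymm_roots_of_card hsplit hi, norm_mul, norm_mul, norm_pow, norm_neg, norm_one,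
    one_pow, mul_one, mul_pow]
  gcongr
  refine (Multiset.norm_esymm_le hR hroots _).trans ?_
  gcongr
  rw [hsplit]
  exact_mod_cast Nat.choose_le_pow _ _

theorem norm_leadingCoeff_mul_pow_le_of_isRoot {z : K} (hz : p.IsRoot z) :
    ‖p.leadingCoeff‖ * ‖z‖ ^ p.natDegree ≤
      ∑ i ∈ Finset.range p.natDegree, ‖p.coeff i‖ * ‖z‖ ^ i := by
  have heval : p.leadingCoeff * z ^ p.natDegree =
      -∑ i ∈ Finset.range p.natDegree, p.coeff i * z ^ i := by
    have h0 := hz.eq_zero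
    rw [eval_eq_sum_range, Finset.sum_range_succ, coeff_natDegree] at h0
    linear_combination h0
  calc ‖p.leadingCoeff‖ * ‖z‖ ^ p.natDegree = ‖p.leadingCoeff * z ^ p.natDegree‖ := by
        rw [norm_mul, norm_pow]
    _ ≤ ∑ i ∈ Finset.range p.natDegree, ‖p.coeff i * z ^ i‖ := by
        rw [heval, norm_neg]; exact norm_sum_le _ _
    _ = ∑ i ∈ Finset.range p.natDegree, ‖p.coeff i‖ * ‖z‖ ^ i := by
        simp only [norm_mul, norm_pow]

theorem norm_le_natDegree_mul_of_isRoot (hdeg : 0 < p.natDegree) {B : ℝ} (hB : 0 ≤ B)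
    (hcoeff : ∀ i < p.natDegree, ‖p.coeff i‖ ≤ ‖p.leadingCoeff‖ * B ^ (p.natDegree - i))
    {z : K} (hz : p.IsRoot z) : ‖z‖ ≤ p.natDegree * B := by
  set e := p.natDegree
  set r := ‖z‖
  rcases le_or_gt r B with hrB | hBr
  · exact hrB.trans (le_mul_of_one_le_left hB (by exact_mod_cast hdeg))
  have hL : 0 < ‖p.leadingCoeff‖ :=
    norm_pos_iff.2 (leadingCoeff_ne_zero.2 (ne_zero_of_natDegree_gt hdeg))
  have hterm : ∀ i ∈ Finset.range e,
      ‖p.coeff i‖ * r ^ i ≤ ‖p.leadingCoeff‖ * (B * r ^ (e - 1)) := by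
    intro i hi
    have hi : i < e := Finset.mem_range.1 hi
    calc ‖p.coeff i‖ * r ^ i ≤ ‖p.leadingCoeff‖ * (B * B ^ (e - 1 - i) * r ^ i) := by
          rw [← pow_succ', show e - 1 - i + 1 = e - i by omega, ← mul_assoc]
          gcongr
          exact hcoeff i hi
      _ ≤ ‖p.leadingCoeff‖ * (B * r ^ (e - 1)) := by
          rw [mul_assoc B, ← pow_sub_mul_pow r (show i ≤ e - 1 by omega)]
          gcongr
  have key :
      ‖p.leadingCoeff‖ * (r ^ (e - 1) * r) ≤
        ‖p.leadingCoeff‖ * (r ^ (e - 1) * (e * B)) := by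
    calc ‖p.leadingCoeff‖ * (r ^ (e - 1) * r) = ‖p.leadingCoeff‖ * r ^ e := by
          rw [← pow_succ, Nat.sub_add_cancel hdeg]
      _ ≤ ∑ i ∈ Finset.range e, ‖p.coeff i‖ * r ^ i :=
          norm_leadingCoeff_mul_pow_le_of_isRoot hz
      _ ≤ ∑ _i ∈ Finset.range e, ‖p.leadingCoeff‖ * (B * r ^ (e - 1)) :=
          Finset.sum_le_sum hterm
      _ = ‖p.leadingCoeff‖ * (r ^ (e - 1) * (e * B)) := by
          rw [Finset.sum_const, Finset.card_range, nsmul_eq_mul]; ring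
  have hr : 0 < r := hB.trans_lt hBr
  exact le_of_mul_le_mul_left (le_of_mul_le_mul_left key hL) (by positivity)

end Polynomial

theorem Ng_nonneg (g : ℂ[X]) : 0 ≤ Ng g :=
  Real.iSup_nonneg fun _ => by positivity

theorem Mg_nonneg (g : ℂ[X]) : 0 ≤ Mg g :=
  Real.iSup_nonneg fun _ => norm_nonneg _

theorem norm_le_Mg {g : ℂ[X]} (hg : g ≠ 0) {z : ℂ} (hz : g.IsRoot z) : ‖z‖ ≤ Mg g := by
  have : Finite {z : ℂ // g.IsRoot z} := (finite_setOfPred_isRoot hg).to_subtype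
  exact le_ciSup (f := fun β : {z : ℂ // g.IsRoot z} => ‖(β : ℂ)‖)
    (Set.finite_range _).bddAbove ⟨z, hz⟩

theorem Ng_le_iff (g : ℂ[X]) {B : ℝ} (hB : 0 ≤ B) :
    Ng g ≤ B ↔
      ∀ i < g.natDegree, ‖g.coeff i‖ ≤ ‖g.leadingCoeff‖ * B ^ (g.natDegree - i) := by
  have hterm : ∀ i < g.natDegree, (‖g.coeff i‖ / ‖g.leadingCoeff‖) ^
      (((g.natDegree : ℝ) - (i : ℝ)))⁻¹ ≤ B ↔
      ‖g.coeff i‖ ≤ ‖g.leadingCoeff‖ * B ^ (g.natDegree - i) := by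
    intro i hi
    have hL : 0 < ‖g.leadingCoeff‖ :=
      norm_pos_iff.2 (leadingCoeff_ne_zero.2 (ne_zero_of_natDegree_gt hi))
    rw [← Nat.cast_sub hi.le, Real.rpow_inv_le_iff_of_pos (by positivity) hB
      (by exact_mod_cast Nat.sub_pos_of_lt hi), Real.rpow_natCast, div_le_iff₀' hL]
  constructor
  · intro hN i hi
    exact (hterm i hi).1 <|
      (le_ciSup (Set.finite_range _).bddAbove (⟨i, hi⟩ : Fin _)).trans hN
  · intro h
    exact Real.iSup_le (fun i => (hterm i i.isLt).2 (h i i.isLt)) hB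

theorem Mg_le_natDegree_mul_Ng {g : ℂ[X]} (hg : 0 < g.natDegree) :
    Mg g ≤ g.natDegree * Ng g :=
  Real.iSup_le (fun β => norm_le_natDegree_mul_of_isRoot hg (Ng_nonneg g)
    ((Ng_le_iff g (Ng_nonneg g)).1 le_rfl) β.2) (by positivity [Ng_nonneg g])

theorem Ng_le_natDegree_mul_Mg (g : ℂ[X]) : Ng g ≤ g.natDegree * Mg g := by
  rw [Ng_le_iff g (by positivity [Mg_nonneg g])]
  intro i hi
  exact norm_coeff_le_of_forall_norm_root_le (splits_iff_card_roots.1 (IsAlgClosed.splits g))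
    (Mg_nonneg g)
    (fun x hx => norm_le_Mg (ne_zero_of_natDegree_gt hi) (isRoot_of_mem_roots hx)) hi.le

/-- For `g ∈ ℂ[z]` of degree `e ≥ 1`,
`M(g)/e ≤ N(g) ≤ e·exp(1)·M(g)`. -/
theorem stmt14 (g : Polynomial ℂ) (hg : 1 ≤ g.natDegree) :
    Mg g / (g.natDegree : ℝ) ≤ Ng g ∧
    Ng g ≤ (g.natDegree : ℝ) * Real.exp 1 * Mg g := by
  refine ⟨?_, (Ng_le_natDegree_mul_Mg g).trans ?_⟩
  · rw [div_le_iff₀' (by exact_mod_cast hg)]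
    exact Mg_le_natDegree_mul_Ng hg
  · rw [mul_right_comm]
    exact le_mul_of_one_le_right (by positivity [Mg_nonneg g]) (Real.one_le_exp zero_le_one)
end

section
/- For all integers N ≥ 1 and t ≥ 1 there is a real constant c, depending only on Nize and t, with the following property: let F = ∑_I b_I x_0^{I_0}⋯x_N^{I_N} ∈ ℂ[x_0,…,x_N] be homogeneous of degree t with F(x_0,…,x_{N−1},0) = ∏_{i=0}^{N−1} x_i^{e_i}, and with b_I ≠ 0 for at least one multi-index I with I_N > 0. Then, for Z the zero locus of F in ℙ^N(ℂ), one has |λ(Z) − log⁺ max{|b_I|^{1/I_N} : I_N > 0}| ≤ c. -/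
open MvPolynomial Filter Topology
open scoped ENNReal

/-!
Write a point of `Z` with `|β_0| = ⋯ = |β_{N-1}| = 1` as `(y, z)` and let
`Λ = log⁺ max |b_I|^{1/I_N}`. Since `F(y, 0) = ∏ y_i^{e_i}` has modulus one, `F(y, z) = 0` forces
`1 ≤ ∑_{I_N > 0} |b_I| |z|^{I_N} ≤ ∑_{I_N > 0} (e^Λ |z|)^{I_N}`, so `1/|z|` is at most `e^Λ` times
the number of monomials: this is the upper bound.

For the lower bound let `b_I` realize `Λ > 0` and `k = I_N`. Averaging over a grid of roots of unity
gives `y` on the torus for which the `z^k`-coefficient of `p(z) = F(y, z)` has modulus at least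
`|b_I|`. Peeling off linear factors shows `|p_k| ρ^k ≤ C(deg p, k) |p_0|` for `ρ` the smallest
modulus of a root of `p`; as `|p_0| = 1`, that root satisfies `|z|^k ≤ 2^t e^{-kΛ}`.
-/

open Finset

namespace Polynomial

variable {K : Type*} [NormedField K] [IsAlgClosed K]

theorem norm_coeff_mul_pow_le_choose_mul_norm_coeff_zero {p : K[X]} (hp : p ≠ 0) {ρ : ℝ}
    (hρ : 0 ≤ ρ) (hroots : ∀ z, p.IsRoot z → ρ ≤ ‖z‖) (k : ℕ) :
    ‖p.coeff k‖ * ρ ^ k ≤ p.natDegree.choose k * ‖p.coeff 0‖ := by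
  induction hn : p.natDegree generalizing p k with
  | zero =>
    rcases k with _ | k
    · simp
    · rw [coeff_eq_zero_of_natDegree_lt (by omega), norm_zero, zero_mul]
      positivity
  | succ n ih =>
    obtain ⟨r, hr⟩ := IsAlgClosed.exists_root p <| by
      rw [degree_eq_natDegree hp, hn]
      exact_mod_cast n.succ_ne_zero
    set q := p /ₘ (X - C r)
    have hpq : p = (X - C r) * q := (mul_divByMonic_eq_iff_isRoot.mpr hr).symm
    have hq : q ≠ 0 := fun h => hp (by rw [hpq, h, mul_zero])
    have hqn : q.natDegree = n := by
      have := natDegree_mul (X_sub_C_ne_zero r) hq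
      rw [← hpq, hn, natDegree_X_sub_C] at this
      omega
    have hqroots : ∀ z, q.IsRoot z → ρ ≤ ‖z‖ := fun z hz =>
      hroots z (by rw [hpq, IsRoot, eval_mul, hz.eq_zero, mul_zero])
    have h0 : ‖p.coeff 0‖ = ‖r‖ * ‖q.coeff 0‖ := by
      rw [hpq, mul_coeff_zero]
      simp
    rcases k with _ | k
    · simp
    have hk : p.coeff (k + 1) = q.coeff k - r * q.coeff (k + 1) := by
      rw [hpq, sub_mul, coeff_sub, coeff_X_mul, coeff_C_mul]
    calc ‖p.coeff (k + 1)‖ * ρ ^ (k + 1)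
        ≤ (‖q.coeff k‖ + ‖r‖ * ‖q.coeff (k + 1)‖) * ρ ^ (k + 1) := by
          gcongr
          rw [hk, ← norm_mul]
          exact norm_sub_le _ _
      _ = ‖q.coeff k‖ * ρ ^ k * ρ + ‖r‖ * (‖q.coeff (k + 1)‖ * ρ ^ (k + 1)) := by ring
      _ ≤ n.choose k * ‖q.coeff 0‖ * ‖r‖ + ‖r‖ * (n.choose (k + 1) * ‖q.coeff 0‖) := by
          gcongr ?_ + ‖r‖ * ?_
          · exact mul_le_mul (ih hq hqroots k hqn) (hroots r hr) hρ (by positivity)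
          · exact ih hq hqroots (k + 1) hqn
      _ = (n + 1).choose (k + 1) * ‖p.coeff 0‖ := by
          rw [h0, Nat.choose_succ_succ]
          push_cast
          ring

theorem exists_isRoot_norm_coeff_mul_pow_le {p : K[X]} {k : ℕ} (hk : 0 < k)
    (hpk : p.coeff k ≠ 0) :
    ∃ z, p.IsRoot z ∧ ‖p.coeff k‖ * ‖z‖ ^ k ≤ p.natDegree.choose k * ‖p.coeff 0‖ := by
  classical
  have hp : p ≠ 0 := fun h => hpk (by simp [h])
  have hdeg : p.degree ≠ 0 := by
    have := le_natDegree_of_ne_zero hpk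
    rw [degree_eq_natDegree hp]
    exact_mod_cast (by omega : p.natDegree ≠ 0)
  obtain ⟨r, hr⟩ := IsAlgClosed.exists_root p hdeg
  obtain ⟨z, hz, hmin⟩ :=
    p.roots.toFinset.exists_min_image (‖·‖) ⟨r, Multiset.mem_toFinset.mpr ((mem_roots hp).mpr hr)⟩
  refine ⟨z, by simpa [hp] using hz, norm_coeff_mul_pow_le_choose_mul_norm_coeff_zero hp
    (norm_nonneg z) (fun w hw => hmin w (Multiset.mem_toFinset.mpr ((mem_roots hp).mpr hw))) k⟩

end Polynomial

theorem Nat.dvd_add_sub_iff_eq {a b n : ℕ} (ha : a < n) (hb : b < n) :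
    n ∣ a + (n - b) ↔ a = b := by
  refine ⟨fun ⟨c, hc⟩ => ?_, fun h => ⟨1, by omega⟩⟩
  rcases c with _ | _ | c
  · omega
  · omega
  · rw [Nat.mul_succ, Nat.mul_succ] at hc
    omega

namespace IsPrimitiveRoot

variable {K : Type*} [Field K] {ζ : K} {n : ℕ}

theorem sum_range_pow_mul (hζ : IsPrimitiveRoot ζ n) (a : ℕ) :
    ∑ s ∈ range n, ζ ^ (a * s) = if n ∣ a then (n : K) else 0 := by
  simp_rw [pow_mul]
  split_ifs with ha
  · simp [(hζ.pow_eq_one_iff_dvd a).mpr ha]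
  · rw [geom_sum_eq (mt (hζ.pow_eq_one_iff_dvd a).mp ha), ← pow_mul, mul_comm, pow_mul,
      hζ.pow_eq_one, one_pow, sub_self, zero_div]

theorem sum_pi_prod_pow_mul {ι : Type*} [Fintype ι] [DecidableEq ι] (hζ : IsPrimitiveRoot ζ n)
    (a : ι → ℕ) :
    ∑ x : ι → Fin n, ∏ j, ζ ^ (a j * x j) =
      if ∀ j, n ∣ a j then (n : K) ^ Fintype.card ι else 0 := by
  have hj : ∀ j, ∑ s : Fin n, ζ ^ (a j * s) = if n ∣ a j then (n : K) else 0 := fun j => by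
    rw [Fin.sum_univ_eq_sum_range (fun s => ζ ^ (a j * s)), hζ.sum_range_pow_mul]
  rw [← Fintype.prod_sum (fun j (s : Fin n) => ζ ^ (a j * s))]
  simp_rw [hj, Fintype.prod_ite_zero, prod_const, card_univ]

end IsPrimitiveRoot

theorem Complex.exists_norm_eq_one_le_norm_sum_prod_pow {ι κ : Type*} [Fintype κ]
    {s : Finset ι} {d : ι → κ → ℕ} {t : ℕ} (hd : ∀ i ∈ s, ∀ j, d i j ≤ t)
    (hinj : Set.InjOn d s) (b : ι → ℂ) {i₀ : ι} (hi₀ : i₀ ∈ s) :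
    ∃ y : κ → ℂ, (∀ j, ‖y j‖ = 1) ∧ ‖b i₀‖ ≤ ‖∑ i ∈ s, b i * ∏ j, y j ^ d i j‖ := by
  classical
  obtain ⟨ζ, hζ⟩ : ∃ ζ : ℂ, IsPrimitiveRoot ζ (t + 1) :=
    ⟨_, Complex.isPrimitiveRoot_exp _ (by omega)⟩
  have hζ1 : ‖ζ‖ = 1 := hζ.norm'_eq_one (by omega)
  let G (x : κ → Fin (t + 1)) : ℂ := ∑ i ∈ s, b i * ∏ j, (ζ ^ (x j : ℕ)) ^ d i j
  -- the character conjugate to the monomial `d i₀`: summing `G * twist` over the grid of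
  -- `(t + 1)`-st roots of unity picks out `b i₀`
  let twist (x : κ → Fin (t + 1)) : ℂ := ∏ j, ζ ^ ((t + 1 - d i₀ j) * x j)
  let e (i : ι) (j : κ) : ℕ := d i j + (t + 1 - d i₀ j)
  have hchar : ∀ i ∈ s, ∑ x : κ → Fin (t + 1), ∏ j, ζ ^ (e i j * x j) =
      if i = i₀ then ((t + 1 : ℕ) : ℂ) ^ Fintype.card κ else 0 := by
    intro i hi
    have hdvd : ∀ j, t + 1 ∣ e i j ↔ d i j = d i₀ j := fun j =>
      Nat.dvd_add_sub_iff_eq (by linarith [hd i hi j]) (by linarith [hd i₀ hi₀ j])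
    rw [hζ.sum_pi_prod_pow_mul]
    exact if_congr ⟨fun h => hinj hi hi₀ (funext fun j => (hdvd j).mp (h j)),
      fun h j => (hdvd j).mpr (by rw [h])⟩ rfl rfl
  have hfourier : ∑ x, G x * twist x = ((t + 1 : ℕ) : ℂ) ^ Fintype.card κ * b i₀ := by
    calc ∑ x, G x * twist x
        = ∑ x : κ → Fin (t + 1), ∑ i ∈ s, b i * ∏ j, ζ ^ (e i j * x j) := by
          refine sum_congr rfl fun x _ => sum_mul .. |>.trans <| sum_congr rfl fun i _ => ?_
          rw [mul_assoc, ← prod_mul_distrib]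
          refine congrArg _ (prod_congr rfl fun j _ => ?_)
          rw [← pow_mul, ← pow_add, add_mul, mul_comm]
      _ = ∑ i ∈ s, b i * ∑ x : κ → Fin (t + 1), ∏ j, ζ ^ (e i j * x j) := by
          rw [sum_comm]
          simp_rw [mul_sum]
      _ = _ := by
          rw [sum_congr rfl fun i hi => by rw [hchar i hi, mul_ite, mul_zero],
            sum_ite_eq' s i₀, if_pos hi₀, mul_comm]
  have hnorm : ∑ _x : κ → Fin (t + 1), ‖b i₀‖ ≤ ∑ x, ‖G x‖ := by
    calc ∑ _x : κ → Fin (t + 1), ‖b i₀‖ = ‖∑ x, G x * twist x‖ := by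
          rw [hfourier, sum_const, card_univ, Fintype.card_fun, Fintype.card_fin, nsmul_eq_mul,
            norm_mul, norm_pow, Complex.norm_natCast]
          push_cast
          ring
      _ ≤ ∑ x, ‖G x * twist x‖ := norm_sum_le _ _
      _ = ∑ x, ‖G x‖ := by simp [twist, hζ1]
  obtain ⟨x, -, hx⟩ := exists_le_of_sum_le (univ_nonempty_iff.mpr ⟨fun _ => 0⟩) hnorm
  exact ⟨fun j => ζ ^ (x j : ℕ), fun j => by simp [hζ1], hx⟩

theorem Finsupp.card_le_of_forall_apply_le {σ : Type*} [Fintype σ] {s : Finset (σ →₀ ℕ)} {t : ℕ}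
    (h : ∀ m ∈ s, ∀ j, m j ≤ t) : #s ≤ (t + 1) ^ Fintype.card σ := by
  classical
  calc #s ≤ #(Fintype.piFinset fun _ : σ => range (t + 1)) :=
        card_le_card_of_injOn (⇑·)
          (fun m hm => Fintype.mem_piFinset.mpr fun j =>
            mem_range.mpr (Nat.lt_succ_of_le (h m hm j)))
          DFunLike.coe_injective.injOn
    _ = (t + 1) ^ Fintype.card σ := by simp

theorem Finsupp.injOn_castSucc_of_apply_last_eq {M : Type*} [Zero M] {N : ℕ} {a : M} :
    Set.InjOn (fun (m : Fin (N + 1) →₀ M) (j : Fin N) => m j.castSucc)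
      {m | m (Fin.last N) = a} := by
  intro m₁ h₁ m₂ h₂ h
  ext i
  induction i using Fin.lastCases with
  | last => exact h₁.trans h₂.symm
  | cast i => exact congrFun h i

theorem Real.max_zero_iSup_mem_filter {ι : Type*} (s : Finset ι) (p : ι → Prop) [DecidablePred p]
    (f : ι → ℝ) (hs : (s.filter p).Nonempty) :
    max 0 (⨆ (i) (_ : i ∈ s) (_ : p i), f i) = max 0 ((s.filter p).sup' hs f) := by
  classical
  have hite : ∀ i, (⨆ (_ : i ∈ s) (_ : p i), f i) = if i ∈ s.filter p then f i else 0 := by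
    intro i
    by_cases h₁ : i ∈ s <;> by_cases h₂ : p i <;> simp [h₁, h₂, ciSup_neg, Real.sSup_empty]
  simp_rw [hite]
  have hle : ∀ i, (if i ∈ s.filter p then f i else 0) ≤ max 0 ((s.filter p).sup' hs f) := by
    intro i
    split_ifs with hi
    · exact le_max_of_le_right (le_sup' f hi)
    · exact le_max_left _ _
  refine le_antisymm (max_le (le_max_left _ _) (Real.iSup_le hle (le_max_left _ _)))
    (max_le_max le_rfl (sup'_le _ _ fun i hi => ?_))
  calc f i = if i ∈ s.filter p then f i else 0 := (if_pos hi).symm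
    _ ≤ _ := le_ciSup ⟨_, Set.forall_mem_range.mpr hle⟩ i

theorem inv_le_card_mul_of_one_le_sum_mul_pow {ι : Type*} {s : Finset ι} {c : ι → ℝ} {k : ι → ℕ}
    {M r : ℝ} (hM : 0 ≤ M) (hr : 0 < r) (hk : ∀ i ∈ s, k i ≠ 0) (hc : ∀ i ∈ s, c i ≤ M ^ k i)
    (h : 1 ≤ ∑ i ∈ s, c i * r ^ k i) : r⁻¹ ≤ #s * M := by
  have hsum : 1 ≤ ∑ i ∈ s, (M * r) ^ k i :=
    h.trans (sum_le_sum fun i hi => by rw [mul_pow]; gcongr; exact hc i hi)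
  rw [inv_le_iff_one_le_mul₀ hr, mul_assoc]
  rcases le_or_gt 1 (M * r) with hMr | hMr
  · have hs : (1 : ℝ) ≤ #s := by
      exact_mod_cast card_pos.mpr (nonempty_of_sum_ne_zero (zero_lt_one.trans_le hsum).ne')
    exact hMr.trans (le_mul_of_one_le_left (by positivity) hs)
  · calc 1 ≤ ∑ i ∈ s, (M * r) ^ k i := hsum
      _ ≤ ∑ _i ∈ s, M * r :=
          sum_le_sum fun i hi => pow_le_of_le_one (by positivity) hMr.le (hk i hi)
      _ = #s * (M * r) := by rw [sum_const, nsmul_eq_mul]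

namespace MvPolynomial

variable {R : Type*} [CommSemiring R] {N t : ℕ} {F : MvPolynomial (Fin (N + 1)) R}

theorem IsHomogeneous.apply_le_of_mem_support {σ : Type*} {F : MvPolynomial σ R}
    (hF : F.IsHomogeneous t) {m : σ →₀ ℕ} (hm : m ∈ F.support) (j : σ) : m j ≤ t := by
  calc m j ≤ m.degree := Finsupp.le_degree j m
    _ = t := by rw [Finsupp.degree_eq_weight_one]; exact hF (mem_support_iff.mp hm)

theorem IsHomogeneous.eval_smul {σ : Type*} [Fintype σ] {F : MvPolynomial σ R}
    (hF : F.IsHomogeneous t) (c : R) (x : σ → R) : eval (c • x) F = c ^ t * eval x F := by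
  rw [eval_eq', eval_eq', mul_sum]
  refine sum_congr rfl fun m hm => ?_
  have hdeg : ∑ j, m j = t := by
    rw [← Finsupp.degree_eq_sum, Finsupp.degree_eq_weight_one]
    exact hF (mem_support_iff.mp hm)
  simp only [Pi.smul_apply, smul_eq_mul, mul_pow, prod_mul_distrib, prod_pow_eq_pow_sum, hdeg]
  ring

theorem eval_snoc (y : Fin N → R) (z : R) :
    eval (Fin.snoc y z) F =
      ∑ m ∈ F.support, coeff m F * (∏ j, y j ^ m j.castSucc) * z ^ m (Fin.last N) := by
  rw [eval_eq']
  refine sum_congr rfl fun m _ => ?_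
  simp only [Fin.prod_univ_castSucc, Fin.snoc_castSucc, Fin.snoc_last, mul_assoc]

theorem eval_snoc_zero_eq_aeval (y : Fin N → R) :
    eval (Fin.snoc y 0) F = aeval y (aeval (fun j : Fin (N + 1) =>
      if h : (j : ℕ) < N then (X ⟨(j : ℕ), h⟩ : MvPolynomial (Fin N) R) else 0) F) := by
  rw [comp_aeval_apply, aeval_eq_eval]
  congr 2 with j
  induction j using Fin.lastCases <;> simp

noncomputable def sliceLast (F : MvPolynomial (Fin (N + 1)) R) (y : Fin N → R) : Polynomial R :=
  ∑ m ∈ F.support,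
    Polynomial.monomial (m (Fin.last N)) (coeff m F * ∏ j, y j ^ m j.castSucc)

theorem eval_sliceLast (y : Fin N → R) (z : R) :
    (sliceLast F y).eval z = eval (Fin.snoc y z) F := by
  simp only [sliceLast, Polynomial.eval_finsetSum, Polynomial.eval_monomial, eval_snoc]

theorem coeff_sliceLast (y : Fin N → R) (k : ℕ) :
    (sliceLast F y).coeff k =
      ∑ m ∈ F.support with m (Fin.last N) = k, coeff m F * ∏ j, y j ^ m j.castSucc := by
  simp only [sliceLast, Polynomial.finsetSum_coeff, Polynomial.coeff_monomial, sum_filter]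

theorem coeff_zero_sliceLast (y : Fin N → R) :
    (sliceLast F y).coeff 0 = eval (Fin.snoc y 0) F := by
  rw [Polynomial.coeff_zero_eq_eval_zero, eval_sliceLast]

theorem natDegree_sliceLast_le (hF : F.IsHomogeneous t) (y : Fin N → R) :
    (sliceLast F y).natDegree ≤ t :=
  Polynomial.natDegree_sum_le_of_forall_le _ _ fun _ hm =>
    (Polynomial.natDegree_monomial_le _).trans (hF.apply_le_of_mem_support hm _)

end MvPolynomial

section ProjectiveZeroLocus

variable {K : Type*} [Field K] {σ : Type*} [Fintype σ]

def projZeroLocus (F : MvPolynomial σ K) : Set (Projectivization K (σ → K)) :=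
  {P | ∃ (x : σ → K) (hx : x ≠ 0), eval x F = 0 ∧ P = Projectivization.mk K x hx}

theorem mk_mem_projZeroLocus_iff {F : MvPolynomial σ K} {t : ℕ} (hF : F.IsHomogeneous t)
    {x : σ → K} (hx : x ≠ 0) : Projectivization.mk K x hx ∈ projZeroLocus F ↔ eval x F = 0 := by
  refine ⟨fun ⟨x', hx', hx'F, h⟩ => ?_, fun h => ⟨x, hx, h, rfl⟩⟩
  obtain ⟨a, rfl⟩ := (Projectivization.mk_eq_mk_iff K _ _ hx hx').mp h
  rw [Units.smul_def, hF.eval_smul, hx'F, mul_zero]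

end ProjectiveZeroLocus

section Lam

variable {K : Type*} [Field K] {N : ℕ} {v : AbsoluteValue K ℝ}
  {Z : Set (Projectivization K (Fin (N + 1) → K))}

theorem lam_le_ofReal {C : ℝ}
    (h : ∀ (β : Fin (N + 1) → K) (hβ : β ≠ 0), (∀ j : Fin N, v (β j.castSucc) = 1) →
      β (Fin.last N) ≠ 0 → Projectivization.mk K β hβ ∈ Z →
      Real.log ((v (β (Fin.last N)))⁻¹) ≤ C) :
    lam N v Z ≤ ENNReal.ofReal C :=
  iSup_le fun β => iSup_le fun hβ => iSup_le fun hu => iSup_le fun hl => iSup_le fun hZ =>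
    ENNReal.ofReal_le_ofReal (h β hβ hu hl hZ)

theorem ofReal_log_inv_le_lam {β : Fin (N + 1) → K} (hβ : β ≠ 0)
    (hu : ∀ j : Fin N, v (β j.castSucc) = 1) (hl : β (Fin.last N) ≠ 0)
    (hZ : Projectivization.mk K β hβ ∈ Z) :
    ENNReal.ofReal (Real.log ((v (β (Fin.last N)))⁻¹)) ≤ lam N v Z :=
  le_iSup_of_le β <| le_iSup_of_le hβ <| le_iSup_of_le hu <| le_iSup_of_le hl <|
    le_iSup_of_le hZ le_rfl

end Lam

section LastCoeffHeight

variable {K : Type*} [NormedField K] {N : ℕ} {F : MvPolynomial (Fin (N + 1)) K}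

noncomputable def lastCoeffHeight (F : MvPolynomial (Fin (N + 1)) K) : ℝ :=
  max 0 (⨆ (m : Fin (N + 1) →₀ ℕ) (_ : m ∈ F.support) (_ : 0 < m (Fin.last N)),
    Real.log ‖coeff m F‖ / (m (Fin.last N) : ℝ))

theorem lastCoeffHeight_nonneg : 0 ≤ lastCoeffHeight F := le_max_left _ _

theorem lastCoeffHeight_eq_max_sup' (hS : (F.support.filter fun m => 0 < m (Fin.last N)).Nonempty) :
    lastCoeffHeight F = max 0 ((F.support.filter fun m => 0 < m (Fin.last N)).sup' hS
      fun m => Real.log ‖coeff m F‖ / (m (Fin.last N) : ℝ)) :=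
  Real.max_zero_iSup_mem_filter _ _ _ hS

theorem norm_coeff_le_exp_lastCoeffHeight_pow {m : Fin (N + 1) →₀ ℕ} (hm : m ∈ F.support)
    (hpos : 0 < m (Fin.last N)) :
    ‖coeff m F‖ ≤ Real.exp (lastCoeffHeight F) ^ m (Fin.last N) := by
  have hmS : m ∈ F.support.filter fun m => 0 < m (Fin.last N) := mem_filter.mpr ⟨hm, hpos⟩
  have hle : Real.log ‖coeff m F‖ / (m (Fin.last N) : ℝ) ≤ lastCoeffHeight F := by
    rw [lastCoeffHeight_eq_max_sup' ⟨m, hmS⟩]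
    exact le_max_of_le_right (le_sup' (fun m => Real.log ‖coeff m F‖ / (m (Fin.last N) : ℝ)) hmS)
  rw [div_le_iff₀ (by positivity), mul_comm] at hle
  calc ‖coeff m F‖ = Real.exp (Real.log ‖coeff m F‖) :=
        (Real.exp_log (norm_pos_iff.mpr (mem_support_iff.mp hm))).symm
    _ ≤ Real.exp (m (Fin.last N) * lastCoeffHeight F) := Real.exp_le_exp.mpr hle
    _ = _ := Real.exp_nat_mul _ _

theorem exists_norm_coeff_eq_exp_lastCoeffHeight_pow (hS : ∃ m ∈ F.support, 0 < m (Fin.last N))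
    (hpos : 0 < lastCoeffHeight F) :
    ∃ m ∈ F.support, 0 < m (Fin.last N) ∧
      ‖coeff m F‖ = Real.exp (lastCoeffHeight F) ^ m (Fin.last N) := by
  obtain ⟨m, hm, hm'⟩ := hS
  have hne : (F.support.filter fun m => 0 < m (Fin.last N)).Nonempty :=
    ⟨m, mem_filter.mpr ⟨hm, hm'⟩⟩
  obtain ⟨m₀, hm₀, hmax⟩ := exists_mem_eq_sup' hne
    fun m => Real.log ‖coeff m F‖ / (m (Fin.last N) : ℝ)
  rw [lastCoeffHeight_eq_max_sup' hne, hmax] at hpos ⊢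
  obtain ⟨hm₀F, hk⟩ := mem_filter.mp hm₀
  refine ⟨m₀, hm₀F, hk, ?_⟩
  rw [max_eq_right ((lt_max_iff.mp hpos).resolve_left (lt_irrefl 0)).le, ← Real.exp_nat_mul,
    mul_div_cancel₀ _ (by positivity), Real.exp_log (norm_pos_iff.mpr (mem_support_iff.mp hm₀F))]

end LastCoeffHeight

section Bounds

variable {N t : ℕ}

theorem norm_eval_snoc_zero_le_sum {K : Type*} [NormedField K] {F : MvPolynomial (Fin (N + 1)) K}
    {y : Fin N → K} (hy : ∀ j, ‖y j‖ = 1) {z : K} (hz : eval (Fin.snoc y z) F = 0) :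
    ‖eval (Fin.snoc y 0) F‖ ≤
      ∑ m ∈ F.support with 0 < m (Fin.last N), ‖coeff m F‖ * ‖z‖ ^ m (Fin.last N) := by
  set a : (Fin (N + 1) →₀ ℕ) → K := fun m => coeff m F * ∏ j, y j ^ m j.castSucc
  have h0 : eval (Fin.snoc y 0) F =
      ∑ m ∈ F.support with ¬0 < m (Fin.last N), a m * z ^ m (Fin.last N) := by
    rw [eval_snoc, sum_filter]
    refine sum_congr rfl fun m _ => ?_
    by_cases h : 0 < m (Fin.last N)
    · simp [h, zero_pow h.ne']
    · simp [a, Nat.eq_zero_of_not_pos h]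
  rw [eval_snoc, ← sum_filter_not_add_sum_filter _ fun m => 0 < m (Fin.last N)] at hz
  calc ‖eval (Fin.snoc y 0) F‖
      = ‖∑ m ∈ F.support with 0 < m (Fin.last N), a m * z ^ m (Fin.last N)‖ := by
        rw [h0, eq_neg_of_add_eq_zero_left hz, norm_neg]
    _ ≤ ∑ m ∈ F.support with 0 < m (Fin.last N), ‖a m * z ^ m (Fin.last N)‖ := norm_sum_le _ _
    _ = _ := by simp [a, hy]

theorem lam_projZeroLocus_le {K : Type*} [NormedField K] {F : MvPolynomial (Fin (N + 1)) K}
    (hF : F.IsHomogeneous t)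
    (h0 : ∀ y : Fin N → K, (∀ j, ‖y j‖ = 1) → ‖eval (Fin.snoc y 0) F‖ = 1) :
    lam N (NormedField.toAbsoluteValue K) (projZeroLocus F) ≤
      ENNReal.ofReal (lastCoeffHeight F + (N + 1) * Real.log (t + 1)) := by
  refine lam_le_ofReal fun β hβ hu hl hZ => ?_
  set z := β (Fin.last N)
  have hu' : ∀ j, ‖Fin.init β j‖ = 1 := hu
  have hz : eval (Fin.snoc (Fin.init β) z) F = 0 := by
    rw [Fin.snoc_init_self]
    exact (mk_mem_projZeroLocus_iff hF hβ).mp hZ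
  have hsum := norm_eval_snoc_zero_le_sum hu' hz
  rw [h0 _ hu'] at hsum
  have hzpos : 0 < ‖z‖ := norm_pos_iff.mpr hl
  have hinv := inv_le_card_mul_of_one_le_sum_mul_pow (Real.exp_pos _).le hzpos
    (fun m hm => (mem_filter.mp hm).2.ne')
    (fun m hm => norm_coeff_le_exp_lastCoeffHeight_pow (mem_filter.mp hm).1 (mem_filter.mp hm).2)
    hsum
  have hcard : (#(F.support.filter fun m => 0 < m (Fin.last N)) : ℝ) ≤ (t + 1) ^ (N + 1) := by
    have := Finsupp.card_le_of_forall_apply_le (s := F.support.filter fun m => 0 < m (Fin.last N))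
      fun m hm => hF.apply_le_of_mem_support (mem_filter.mp hm).1
    rw [Fintype.card_fin] at this
    exact_mod_cast this
  show Real.log ‖z‖⁻¹ ≤ _
  calc Real.log ‖z‖⁻¹
      ≤ Real.log (#(F.support.filter fun m => 0 < m (Fin.last N)) *
          Real.exp (lastCoeffHeight F)) := Real.log_le_log (inv_pos.mpr hzpos) hinv
    _ ≤ Real.log ((t + 1) ^ (N + 1) * Real.exp (lastCoeffHeight F)) :=
        Real.log_le_log ((inv_pos.mpr hzpos).trans_le hinv) (by gcongr)
    _ = _ := by
        rw [Real.log_mul (by positivity) (by positivity), Real.log_pow, Real.log_exp]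
        push_cast
        ring

theorem exists_root_exp_lastCoeffHeight_mul_norm_le {F : MvPolynomial (Fin (N + 1)) ℂ}
    (hF : F.IsHomogeneous t)
    (h0 : ∀ y : Fin N → ℂ, (∀ j, ‖y j‖ = 1) → ‖eval (Fin.snoc y 0) F‖ = 1)
    (hS : ∃ m ∈ F.support, 0 < m (Fin.last N)) (hΛ : 0 < lastCoeffHeight F) :
    ∃ y : Fin N → ℂ, (∀ j, ‖y j‖ = 1) ∧ ∃ z ≠ 0, eval (Fin.snoc y z) F = 0 ∧
      Real.exp (lastCoeffHeight F) * ‖z‖ ≤ 2 ^ t := by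
  obtain ⟨m₀, hm₀, hk, hb⟩ := exists_norm_coeff_eq_exp_lastCoeffHeight_pow hS hΛ
  set k := m₀ (Fin.last N)
  obtain ⟨y, hy, hyk⟩ := Complex.exists_norm_eq_one_le_norm_sum_prod_pow
    (s := F.support.filter fun m => m (Fin.last N) = k)
    (fun m hm j => hF.apply_le_of_mem_support (mem_filter.mp hm).1 _)
    (Finsupp.injOn_castSucc_of_apply_last_eq.mono fun m hm => (mem_filter.mp hm).2)
    (fun m => coeff m F) (mem_filter.mpr ⟨hm₀, rfl⟩)
  rw [← coeff_sliceLast] at hyk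
  have hpk : (sliceLast F y).coeff k ≠ 0 :=
    norm_pos_iff.mp ((norm_pos_iff.mpr (mem_support_iff.mp hm₀)).trans_le hyk)
  obtain ⟨z, hz, hzk⟩ := Polynomial.exists_isRoot_norm_coeff_mul_pow_le hk hpk
  rw [coeff_zero_sliceLast, h0 y hy, mul_one] at hzk
  have hz0 : z ≠ 0 := by
    rintro rfl
    have := h0 y hy
    rw [← coeff_zero_sliceLast, Polynomial.coeff_zero_eq_eval_zero, hz.eq_zero, norm_zero] at this
    exact zero_ne_one this
  refine ⟨y, hy, z, hz0, by rw [← eval_sliceLast]; exact hz, ?_⟩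
  have hpow : (Real.exp (lastCoeffHeight F) * ‖z‖) ^ k ≤ (2 ^ t) ^ k :=
    calc (Real.exp (lastCoeffHeight F) * ‖z‖) ^ k = ‖coeff m₀ F‖ * ‖z‖ ^ k := by rw [mul_pow, hb]
      _ ≤ ‖(sliceLast F y).coeff k‖ * ‖z‖ ^ k := by gcongr
      _ ≤ (sliceLast F y).natDegree.choose k := hzk
      _ ≤ 2 ^ (sliceLast F y).natDegree := by exact_mod_cast Nat.choose_le_two_pow _ _
      _ ≤ 2 ^ t := pow_le_pow_right₀ one_le_two (natDegree_sliceLast_le hF y)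
      _ ≤ (2 ^ t) ^ k := le_self_pow₀ (one_le_pow₀ one_le_two) hk.ne'
  exact (pow_le_pow_iff_left₀ (by positivity) (by positivity) hk.ne').mp hpow

theorem ofReal_le_lam_projZeroLocus {F : MvPolynomial (Fin (N + 1)) ℂ} (hF : F.IsHomogeneous t)
    (h0 : ∀ y : Fin N → ℂ, (∀ j, ‖y j‖ = 1) → ‖eval (Fin.snoc y 0) F‖ = 1)
    (hS : ∃ m ∈ F.support, 0 < m (Fin.last N)) :
    ENNReal.ofReal (lastCoeffHeight F - t * Real.log 2) ≤
      lam N (NormedField.toAbsoluteValue ℂ) (projZeroLocus F) := by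
  rcases le_or_gt (lastCoeffHeight F) 0 with hΛ | hΛ
  · rw [ENNReal.ofReal_of_nonpos (by have := Real.log_nonneg one_le_two; nlinarith)]
    exact bot_le
  obtain ⟨y, hy, z, hz0, hz, hle⟩ := exists_root_exp_lastCoeffHeight_mul_norm_le hF h0 hS hΛ
  have hβ : (Fin.snoc y z : Fin (N + 1) → ℂ) ≠ 0 := fun h =>
    hz0 (by simpa using congrFun h (Fin.last N))
  refine le_trans ?_ (ofReal_log_inv_le_lam hβ (fun j => by rw [Fin.snoc_castSucc]; exact hy j)
    (by rwa [Fin.snoc_last]) ((mk_mem_projZeroLocus_iff hF hβ).mpr hz))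
  refine ENNReal.ofReal_le_ofReal ?_
  show _ ≤ Real.log ‖(Fin.snoc y z : Fin (N + 1) → ℂ) (Fin.last N)‖⁻¹
  have hlog := Real.log_le_log (by positivity) hle
  rw [Real.log_mul (Real.exp_pos _).ne' (norm_ne_zero_iff.mpr hz0), Real.log_exp,
    Real.log_pow] at hlog
  rw [Fin.snoc_last, Real.log_inv]
  linarith

end Bounds

theorem stmt17_general (N : ℕ) (t : ℕ) :
    ∃ c : ℝ, ∀ (F : MvPolynomial (Fin (N + 1)) ℂ) (e : Fin N → ℕ),
      F.IsHomogeneous t →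
      (aeval (fun j : Fin (N + 1) =>
          if h : (j : ℕ) < N then (X ⟨(j : ℕ), h⟩ : MvPolynomial (Fin N) ℂ) else 0) F =
        ∏ i : Fin N, X i ^ e i) →
      (∃ m ∈ F.support, 0 < m (Fin.last N)) →
      lam N (NormedField.toAbsoluteValue ℂ) {P | ∃ (x : Fin (N + 1) → ℂ) (hx : x ≠ 0),
          eval x F = 0 ∧ P = Projectivization.mk ℂ x hx} ≠ ⊤ ∧
      |(lam N (NormedField.toAbsoluteValue ℂ) {P | ∃ (x : Fin (N + 1) → ℂ) (hx : x ≠ 0),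
            eval x F = 0 ∧ P = Projectivization.mk ℂ x hx}).toReal -
        max 0 (⨆ (m : Fin (N + 1) →₀ ℕ) (_ : m ∈ F.support) (_ : 0 < m (Fin.last N)),
          Real.log ‖MvPolynomial.coeff m F‖ / (m (Fin.last N) : ℝ))| ≤ c := by
  refine ⟨(N + 1) * Real.log (t + 1) + t * Real.log 2, fun F e hF hA hS => ?_⟩
  show lam N _ (projZeroLocus F) ≠ ⊤ ∧
    |(lam N _ (projZeroLocus F)).toReal - lastCoeffHeight F| ≤ _
  have h0 : ∀ y : Fin N → ℂ, (∀ j, ‖y j‖ = 1) → ‖eval (Fin.snoc y 0) F‖ = 1 := fun y hy => by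
    rw [eval_snoc_zero_eq_aeval, hA]
    simp [hy]
  have hup := lam_projZeroLocus_le hF h0
  have hlo := ofReal_le_lam_projZeroLocus hF h0 hS
  have hne := ne_top_of_le_ne_top ENNReal.ofReal_ne_top hup
  have hc₁ : 0 ≤ (N + 1) * Real.log (t + 1) :=
    mul_nonneg (by positivity) (Real.log_nonneg (le_add_of_nonneg_left t.cast_nonneg))
  have hc₂ : 0 ≤ t * Real.log 2 := by positivity
  have hup' := ENNReal.toReal_le_of_le_ofReal (add_nonneg lastCoeffHeight_nonneg hc₁) hup
  have hlo' := (ENNReal.ofReal_le_iff_le_toReal hne).mp hlo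
  exact ⟨hne, abs_sub_le_iff.mpr ⟨by linarith, by linarith⟩⟩

/-- For all `N ≥ 1`, `t ≥ 1` there is a constant `c = c(N,t)` such
that for every homogeneous form `F = ∑_I b_I x^I` of degree `t` over `ℂ` with
`F(x_0,…,x_{N-1},0) = ∏ x_i^{e_i}` and some `b_I ≠ 0` with `I_N > 0`, the zero locus
`Z` of `F` satisfies `|λ(Z) − log⁺ max{|b_I|^{1/I_N} : I_N > 0}| ≤ c`. -/
theorem stmt17 (N : ℕ) (hN : 1 ≤ N) (t : ℕ) (ht : 1 ≤ t) :
    ∃ c : ℝ, ∀ (F : MvPolynomial (Fin (N + 1)) ℂ) (e : Fin N → ℕ),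
      F.IsHomogeneous t →
      (aeval (fun j : Fin (N + 1) =>
          if h : (j : ℕ) < N then (X ⟨(j : ℕ), h⟩ : MvPolynomial (Fin N) ℂ) else 0) F =
        ∏ i : Fin N, X i ^ e i) →
      (∃ m ∈ F.support, 0 < m (Fin.last N)) →
      lam N (NormedField.toAbsoluteValue ℂ) {P | ∃ (x : Fin (N + 1) → ℂ) (hx : x ≠ 0),
          eval x F = 0 ∧ P = Projectivization.mk ℂ x hx} ≠ ⊤ ∧
      |(lam N (NormedField.toAbsoluteValue ℂ) {P | ∃ (x : Fin (N + 1) → ℂ) (hx : x ≠ 0),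
            eval x F = 0 ∧ P = Projectivization.mk ℂ x hx}).toReal -
        max 0 (⨆ (m : Fin (N + 1) →₀ ℕ) (_ : m ∈ F.support) (_ : 0 < m (Fin.last N)),
          Real.log ‖MvPolynomial.coeff m F‖ / (m (Fin.last N) : ℝ))| ≤ c :=
  stmt17_general N t
end
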